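/- (One-step explicit solution for the twisted Sierpiński gasket, equation (4.2).) Let x0 ≥ y0 > 0. Then 9x0² − 4x0y0 − 4y0² > 0, and setting M = √(9x0² − 4x0y0 − 4y0²), x1 = (1/10)(x0 + 2y0 + 3M), y1 = (1/5)(3x0 + y0 − M), one has x1 ≥ y1 > 0, and the triples (x0, y0, y0) and (x1, y1, y1) satisfy the twisted one-step compatibility equations: x0 = x1 + ψ(x1; y1, y1) and y0 = y1 + ψ(y1; y1, x1). -/

import Mathlib

/-!
With `D = 9x₀² - 4x₀y₀ - 4y₀²` one has `D - x₀² = 4(x₀ - y₀)(2x₀ + y₀) ≥ 0` and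
`(3x₀ + y₀)² - D = 10x₀y₀ + 5y₀² > 0`, so `x₀ ≤ M < 3x₀ + y₀`; this gives `y₁ > 0` and
`x₁ - y₁ = (M - x₀)/2 ≥ 0`. After multiplying by `x₁ + 2y₁`, both compatibility equations
become polynomial identities in `x₀, y₀, M` modulo `M² = D`, for either sign of the root.
-/

noncomputable section

/-- Twisted Δ-Y transfer term `ψ(x; y, z) = 2yz/(x+y+z)`. -/
def psi (x y z : ℝ) : ℝ := 2 * y * z / (x + y + z)

theorem sq_le_discr {x y : ℝ} (hy : 0 ≤ y) (hle : y ≤ x) :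
    x ^ 2 ≤ 9 * x ^ 2 - 4 * x * y - 4 * y ^ 2 := by
  nlinarith [mul_nonneg (sub_nonneg.2 hle) (by linarith : 0 ≤ 2 * x + y)]

theorem discr_lt_sq {x y : ℝ} (hx : 0 ≤ x) (hy : 0 < y) :
    9 * x ^ 2 - 4 * x * y - 4 * y ^ 2 < (3 * x + y) ^ 2 := by
  nlinarith [mul_nonneg hx hy.le]

theorem twisted_compatible_of_sq_eq_discr {x0 y0 M x1 y1 : ℝ}
    (hM : M ^ 2 = 9 * x0 ^ 2 - 4 * x0 * y0 - 4 * y0 ^ 2)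
    (hx1 : x1 = (x0 + 2 * y0 + 3 * M) / 10) (hy1 : y1 = (3 * x0 + y0 - M) / 5)
    (hs : x1 + y1 + y1 ≠ 0) :
    x0 = x1 + psi x1 y1 y1 ∧ y0 = y1 + psi y1 y1 x1 := by
  have hs' : y1 + y1 + x1 ≠ 0 := by rwa [add_comm, ← add_assoc]
  unfold psi
  constructor
  · rw [add_div' _ _ _ hs, eq_div_iff hs, hx1, hy1]
    linear_combination (-1 / 20) * hM
  · rw [add_div' _ _ _ hs', eq_div_iff hs', hx1, hy1]
    linear_combination (1 / 10) * hM

theorem stmt17 (x0 y0 : ℝ) (hy : 0 < y0) (hle : y0 ≤ x0)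
    (M x1 y1 : ℝ)
    (hM : M = Real.sqrt (9 * x0 ^ 2 - 4 * x0 * y0 - 4 * y0 ^ 2))
    (hx1 : x1 = (x0 + 2 * y0 + 3 * M) / 10)
    (hy1 : y1 = (3 * x0 + y0 - M) / 5) :
    0 < 9 * x0 ^ 2 - 4 * x0 * y0 - 4 * y0 ^ 2 ∧
    0 < y1 ∧ y1 ≤ x1 ∧
    x0 = x1 + psi x1 y1 y1 ∧ y0 = y1 + psi y1 y1 x1 := by
  have hx0 : 0 < x0 := hy.trans_le hle
  have hsq := sq_le_discr hy.le hle
  have hD : 0 < 9 * x0 ^ 2 - 4 * x0 * y0 - 4 * y0 ^ 2 := (pow_pos hx0 2).trans_le hsq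
  have hM2 : M ^ 2 = 9 * x0 ^ 2 - 4 * x0 * y0 - 4 * y0 ^ 2 := hM ▸ Real.sq_sqrt hD.le
  have hx0M : x0 ≤ M := hM ▸ Real.le_sqrt_of_sq_le hsq
  have hMlt : M < 3 * x0 + y0 := hM ▸ (Real.sqrt_lt' (by linarith)).2 (discr_lt_sq hx0.le hy)
  have hy1_pos : 0 < y1 := by rw [hy1]; linarith
  have hy1_le : y1 ≤ x1 := by rw [hx1, hy1]; linarith
  exact ⟨hD, hy1_pos, hy1_le,
    twisted_compatible_of_sq_eq_discr hM2 hx1 hy1 (by linarith)⟩
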